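/- arXiv:math-ph/0610077 — 3 statements merged into one kernel-verified Lean document; each statement's English description precedes it below -/
import Mathlib

section
/- Let w = (w_1, …, w_f) be a permutation lattice of order f. Then the word w̄ = (w̄_1, …, w̄_f) defined by w̄_i = #̂_{w^{(i−1)}}(w_i) + θ(w_i), where θ(k) = 1 if k > 0 and θ(k) = 0 if k < 0, is again a permutation lattice of order f. -/
/-- `θ(k) = 1` if `k > 0` and `0` if `k < 0` (we also set it to `0` at `k = 0`,
a value never used since words have nonzero entries). -/
def theta (k : ℤ) : ℤ := if 0 < k then 1 else 0

/-- `hatCount w i k = #̂_{w^{(i)}}(k)`: the number of indices `1 ≤ j ≤ i` with `w j = k`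
minus the number of indices `1 ≤ j ≤ i` with `w j = -k`.  A word of order `f` is
represented by a function `w : ℕ → ℤ`, its entries being `w 1, …, w f` (1-based). -/
def hatCount (w : ℕ → ℤ) (i : ℕ) (k : ℤ) : ℤ :=
  (((Finset.Icc 1 i).filter fun j => w j = k).card : ℤ) -
    (((Finset.Icc 1 i).filter fun j => w j = -k).card : ℤ)

/-- `w : ℕ → ℤ` is a permutation lattice of order `f`: all entries `w 1, …, w f` are
nonzero, and for every prefix `w^{(i)}` (`1 ≤ i ≤ f`) the sequence
`k ↦ #̂_{w^{(i)}}(k)` (`k ≥ 1`) is weakly decreasing with nonnegative terms. -/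
def IsPermLattice (f : ℕ) (w : ℕ → ℤ) : Prop :=
  (∀ i, 1 ≤ i → i ≤ f → w i ≠ 0) ∧
  ∀ i, 1 ≤ i → i ≤ f → ∀ k : ℤ, 1 ≤ k →
    hatCount w i (k + 1) ≤ hatCount w i k ∧ 0 ≤ hatCount w i k

/-- The transpose word: `(w^t)_i = #̂_{w^{(i-1)}}(w_i) + θ(w_i)`. -/
def transposePL (w : ℕ → ℤ) : ℕ → ℤ := fun i => hatCount w (i - 1) (w i) + theta (w i)

/-! Write `p_i = #̂_{w^{(i)}}` and `q_i = #̂_{(w^t)^{(i)}}` as functions of `k ≥ 1`; the lattice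
condition says that every `p_i` is a partition. The letter `k > 0` adds the last box of row `k`,
which lies in column `p_{i-1}(k) + 1`, and the letter `-k` removes the last box of row `k`, in
column `p_{i-1}(k)`; the transposed letter is that column, with the same sign. So `q_i` grows
and shrinks exactly like the conjugate of `p_i`, and a conjugate partition is a partition. -/

def IsPartitionShape (p : ℤ → ℤ) : Prop :=
  ∀ k, 1 ≤ k → p (k + 1) ≤ p k ∧ 0 ≤ p k

/-- `q` is the conjugate of `p`: `q c` is the number of rows of `p` of length at least `c`. -/
def IsConjugate (q p : ℤ → ℤ) : Prop :=
  ∀ c, 1 ≤ c → 0 ≤ q c ∧ ∀ m, 1 ≤ m → (m ≤ q c ↔ c ≤ p m)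

namespace IsPartitionShape

variable {p : ℤ → ℤ}

theorem antitone (hp : IsPartitionShape p) {j k : ℤ} (hj : 1 ≤ j) (hjk : j ≤ k) :
    p k ≤ p j :=
  Int.leInduction (motive := fun k _ => p k ≤ p j) le_rfl
    (fun n hn ih => (hp n (hj.trans hn)).1.trans ih) k hjk

end IsPartitionShape

namespace IsConjugate

variable {p p' q q' : ℤ → ℤ}

theorem isPartitionShape (h : IsConjugate q p) : IsPartitionShape q := by
  intro c hc
  obtain ⟨hq₀, hq⟩ := h c hc
  refine ⟨?_, hq₀⟩
  rcases le_or_gt (q (c + 1)) 0 with hle | hpos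
  · omega
  · have := ((h (c + 1) (by omega)).2 _ hpos).1 le_rfl
    exact ((hq _ hpos).2 (by omega))

theorem apply_eq (h : IsConjugate q p) {c n : ℤ} (hc : 1 ≤ c) (hn : 0 ≤ n)
    (hle : 1 ≤ n → c ≤ p n) (hlt : p (n + 1) < c) : q c = n := by
  obtain ⟨hq₀, hq⟩ := h c hc
  have hge : n ≤ q c := by
    rcases eq_or_lt_of_le hn with rfl | hn
    · exact hq₀
    · exact (hq n hn).2 (hle hn)
  have hnot : ¬ n + 1 ≤ q c := fun h' => absurd ((hq (n + 1) (by omega)).1 h') (by omega)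
  omega

theorem addBox (h : IsConjugate q p) (hp : IsPartitionShape p) (hp' : IsPartitionShape p')
    {k : ℤ} (hk : 1 ≤ k) (hrow : ∀ m, 1 ≤ m → p' m = p m + if m = k then 1 else 0)
    (hcol : ∀ c, 1 ≤ c → q' c = q c + if c = p k + 1 then 1 else 0) :
    IsConjugate q' p' := by
  have hp'k : p' k = p k + 1 := by simp [hrow k hk]
  have hqk : q (p k + 1) = k - 1 := by
    refine h.apply_eq (by linarith [(hp k hk).2]) (by omega) (fun hk' => ?_) (by simp)
    have := hp'.antitone hk' (show k - 1 ≤ k by omega)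
    rw [hrow _ hk', if_neg (by omega)] at this
    omega
  intro c hc
  obtain ⟨hq₀, hq⟩ := h c hc
  rw [hcol c hc]
  by_cases hcc : c = p k + 1
  · subst hcc
    rw [if_pos rfl, hqk]
    refine ⟨by omega, fun m hm => ⟨fun hmk => ?_, fun hc' => ?_⟩⟩
    · have := hp'.antitone hm (show m ≤ k by omega)
      omega
    · by_contra hmk
      have := hp.antitone hk (show k ≤ m by omega)
      rw [hrow m hm, if_neg (by omega)] at hc'
      omega
  · rw [if_neg hcc, add_zero]
    refine ⟨hq₀, fun m hm => ?_⟩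
    rw [hq m hm, hrow m hm]
    split_ifs with hmk
    · subst hmk; omega
    · simp

theorem removeBox (h : IsConjugate q p) (hp : IsPartitionShape p) (hp' : IsPartitionShape p')
    {k : ℤ} (hk : 1 ≤ k) (hrow : ∀ m, 1 ≤ m → p' m = p m - if m = k then 1 else 0)
    (hcol : ∀ c, 1 ≤ c → q' c = q c - if c = p k then 1 else 0) :
    IsConjugate q' p' := by
  have hp'k : p' k = p k - 1 := by simp [hrow k hk]
  have hpk : 1 ≤ p k := by linarith [(hp' k hk).2]
  have hqk : q (p k) = k := by
    refine h.apply_eq hpk (by omega) (fun _ => le_rfl) ?_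
    have := (hp' k hk).1
    rw [hrow _ (by omega), if_neg (by omega)] at this
    omega
  intro c hc
  obtain ⟨hq₀, hq⟩ := h c hc
  rw [hcol c hc]
  by_cases hcc : c = p k
  · subst hcc
    rw [if_pos rfl, hqk]
    refine ⟨by omega, fun m hm => ⟨fun hmk => ?_, fun hc' => ?_⟩⟩
    · have := hp.antitone hm (show m ≤ k by omega)
      rw [hrow m hm, if_neg (by omega)]
      omega
    · by_contra hmk
      have := hp'.antitone hk (show k ≤ m by omega)
      omega
  · rw [if_neg hcc, sub_zero]
    refine ⟨hq₀, fun m hm => ?_⟩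
    rw [hq m hm, hrow m hm]
    split_ifs with hmk
    · subst hmk; omega
    · simp

end IsConjugate

theorem hatCount_zero (w : ℕ → ℤ) (k : ℤ) : hatCount w 0 k = 0 := by
  simp [hatCount]

theorem hatCount_neg (w : ℕ → ℤ) (i : ℕ) (k : ℤ) : hatCount w i (-k) = -hatCount w i k := by
  simp only [hatCount, neg_neg]
  ring

theorem hatCount_succ (w : ℕ → ℤ) (i : ℕ) (k : ℤ) :
    hatCount w (i + 1) k =
      hatCount w i k + (if w (i + 1) = k then 1 else 0) - (if w (i + 1) = -k then 1 else 0) := by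
  simp only [hatCount, Finset.card_filter, Finset.sum_Icc_succ_top (by omega : 1 ≤ i + 1)]
  push_cast
  ring

theorem transposePL_succ_of_pos {w : ℕ → ℤ} {i : ℕ} (h : 0 < w (i + 1)) :
    transposePL w (i + 1) = hatCount w i (w (i + 1)) + 1 := by
  simp [transposePL, theta, h]

theorem transposePL_succ_of_neg {w : ℕ → ℤ} {i : ℕ} (h : w (i + 1) < 0) :
    transposePL w (i + 1) = -hatCount w i (-w (i + 1)) := by
  simp [transposePL, theta, hatCount_neg, h.not_gt]

namespace IsPermLattice

variable {f : ℕ} {w : ℕ → ℤ}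

theorem isPartitionShape_hatCount (hw : IsPermLattice f w) {i : ℕ} (hi : i ≤ f) :
    IsPartitionShape (hatCount w i) := by
  rcases Nat.eq_zero_or_pos i with rfl | hi₀
  · simp [IsPartitionShape, hatCount_zero]
  · exact hw.2 i hi₀ hi

theorem isConjugate_hatCount (hw : IsPermLattice f w) :
    ∀ i ≤ f, IsConjugate (hatCount (transposePL w) i) (hatCount w i) := by
  intro i
  induction i with
  | zero => intro _ c hc; simp only [hatCount_zero]; exact ⟨le_rfl, fun m hm => by omega⟩
  | succ i ih =>
    intro hi
    have hp := hw.isPartitionShape_hatCount (i.le_succ.trans hi)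
    have hp' := hw.isPartitionShape_hatCount hi
    rcases (hw.1 (i + 1) (by omega) hi).lt_or_gt with hneg | hpos
    · have hlet := transposePL_succ_of_neg hneg
      refine (ih (by omega)).removeBox hp hp' (k := -w (i + 1)) (by omega)
        (fun m hm => ?_) (fun c hc => ?_)
      · rw [hatCount_succ]; split_ifs <;> omega
      · have := (hp _ (show 1 ≤ -w (i + 1) by omega)).2
        rw [hatCount_succ, hlet]; split_ifs <;> omega
    · have hlet := transposePL_succ_of_pos hpos
      refine (ih (by omega)).addBox hp hp' hpos (fun m hm => ?_) (fun c hc => ?_)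
      · rw [hatCount_succ]; split_ifs <;> omega
      · have := (hp _ hpos).2
        rw [hatCount_succ, hlet]; split_ifs <;> omega

theorem transposePL_ne_zero (hw : IsPermLattice f w) {i : ℕ} (hi₁ : 1 ≤ i) (hi : i ≤ f) :
    transposePL w i ≠ 0 := by
  obtain ⟨i, rfl⟩ : ∃ j, i = j + 1 := ⟨i - 1, by omega⟩
  rcases (hw.1 (i + 1) hi₁ hi).lt_or_gt with hneg | hpos
  · have := (hw.isPartitionShape_hatCount hi (-w (i + 1)) (by omega)).2
    rw [hatCount_succ, if_neg (by omega), if_pos (by omega)] at this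
    rw [transposePL_succ_of_neg hneg]
    omega
  · have := (hw.isPartitionShape_hatCount (i.le_succ.trans hi) (w (i + 1)) hpos).2
    rw [transposePL_succ_of_pos hpos]
    omega

end IsPermLattice

/-- If `w` is a permutation lattice of order `f`, then its transpose
`w^t` is again a permutation lattice of order `f`. -/
theorem transpose_isPermLattice (f : ℕ) (w : ℕ → ℤ) (hw : IsPermLattice f w) :
    IsPermLattice f (transposePL w) :=
  ⟨fun _ hi₁ hi => hw.transposePL_ne_zero hi₁ hi,
    fun i _ hi => (hw.isConjugate_hatCount i hi).isPartitionShape⟩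
end

section
/- Let f and k be natural numbers with 2k ≤ f, and let λ be a partition with |λ| = f − 2k. Then the number of permutation lattices of order f with diagram λ equals (f! / ((f−2k)! · 2^k · k!)) times the number of permutation lattices of order f − 2k with diagram λ all of whose entries are positive (the latter being the number of standard Young tableaux of shape λ). -/
/-!
Deleting the last letter of a permutation lattice with diagram `λ` leaves a permutation lattice
whose diagram is `λ` minus a removable corner (positive letter) or `λ` plus an addable corner
(negative letter). Hence the numbers `N f λ` of permutation lattices and `P n λ` of standard
Young tableaux satisfy
`N (f+1) λ = ∑_{s removable} N f (λ - e_s) + ∑_{r addable} N f (λ + e_r)` and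
`P (n+1) λ = ∑_{s removable} P n (λ - e_s)`. Since a shape has one more addable than removable
corner, the second recurrence gives `∑_{r addable} P (n+1) (λ + e_r) = (n+1) P n λ`.
By induction on `f = n + 2k`, the removable and addable sums then contribute `n` and `2k` times
`(f-1)! P n λ / (n! 2^k k!)`, which add up to the claimed `f! P n λ / (n! 2^k k!)`.
-/

open Finset Function
open Finsupp (single)
open scoped Nat

namespace PermLattice

variable {f : ℕ} {w v : ℕ → ℤ} {A : Set ℤ} {l : ℕ →₀ ℕ} {r s : ℕ}

lemma hatCount_zero (w : ℕ → ℤ) (k : ℤ) : hatCount w 0 k = 0 := by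
  simp [hatCount]

lemma hatCount_succ (w : ℕ → ℤ) (i : ℕ) (k : ℤ) :
    hatCount w (i + 1) k =
      hatCount w i k + (if w (i + 1) = k then 1 else 0) - (if w (i + 1) = -k then 1 else 0) := by
  have hi : i + 1 ∉ Icc 1 i := by simp
  simp only [hatCount, ← insert_Icc_right_eq_Icc_add_one (Nat.le_add_left 1 i), filter_insert]
  split_ifs <;> simp_all [card_insert_of_notMem (fun h => hi (mem_filter.1 h).1)] <;> ring

lemma hatCount_update_of_le {i : ℕ} (hi : i ≤ f) (c k : ℤ) :
    hatCount (update w (f + 1) c) i k = hatCount w i k := by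
  have h : ∀ j ∈ Icc 1 i, update w (f + 1) c j = w j := fun j hj =>
    update_of_ne (by simp at hj; omega) _ _
  unfold hatCount
  congr 2 <;> congr 1 <;> exact filter_congr fun j hj => by rw [h j hj]

lemma hatCount_update_succ (v : ℕ → ℤ) (f : ℕ) (c k : ℤ) :
    hatCount (update v (f + 1) c) (f + 1) k =
      hatCount v f k + (if c = k then 1 else 0) - (if c = -k then 1 else 0) := by
  rw [hatCount_succ, hatCount_update_of_le le_rfl, update_self]

lemma sum_hatCount_le (w : ℕ → ℤ) (s : Finset ℕ) (i : ℕ) :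
    ∑ r ∈ s, hatCount w i r ≤ i := by
  induction i with
  | zero => simp [hatCount_zero]
  | succ i ih =>
    have hlast : ∑ r ∈ s, (if w (i + 1) = r then (1 : ℤ) else 0) ≤ 1 := by
      rw [sum_boole]
      exact_mod_cast card_le_one.2 fun a ha b hb => by simp at ha hb; omega
    have hstep : ∑ r ∈ s, hatCount w (i + 1) r ≤
        ∑ r ∈ s, hatCount w i r + ∑ r ∈ s, (if w (i + 1) = r then (1 : ℤ) else 0) := by
      rw [← sum_add_distrib]
      gcongr with r
      rw [hatCount_succ]
      split_ifs <;> omega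
    push_cast
    omega

lemma _root_.IsPermLattice.hatCount_nonneg (hw : IsPermLattice f w) {k : ℤ}
    (hk : 1 ≤ k) : 0 ≤ hatCount w f k := by
  rcases f with _ | f
  · simp [hatCount_zero]
  · exact (hw.2 (f + 1) le_add_self le_rfl k hk).2

lemma _root_.IsPermLattice.hatCount_succ_le (hw : IsPermLattice f w) {k : ℤ}
    (hk : 1 ≤ k) : hatCount w f (k + 1) ≤ hatCount w f k := by
  rcases f with _ | f
  · simp [hatCount_zero]
  · exact (hw.2 (f + 1) le_add_self le_rfl k hk).1

lemma isPermLattice_succ_iff :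
    IsPermLattice (f + 1) w ↔ IsPermLattice f w ∧ w (f + 1) ≠ 0 ∧
      ∀ k : ℤ, 1 ≤ k → hatCount w (f + 1) (k + 1) ≤ hatCount w (f + 1) k ∧
        0 ≤ hatCount w (f + 1) k := by
  constructor
  · rintro ⟨h0, hl⟩
    exact ⟨⟨fun i h1 h2 => h0 i h1 (by omega), fun i h1 h2 => hl i h1 (by omega)⟩,
      h0 _ le_add_self le_rfl, hl _ le_add_self le_rfl⟩
  · rintro ⟨⟨h0, hl⟩, hlast0, hlast⟩
    refine ⟨fun i h1 h2 => ?_, fun i h1 h2 => ?_⟩ <;> rcases Nat.le_succ_iff.1 h2 with h2 | rfl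
    exacts [h0 i h1 h2, hlast0, hl i h1 h2, hlast]

lemma isPermLattice_update_iff {c : ℤ} :
    IsPermLattice f (update w (f + 1) c) ↔ IsPermLattice f w := by
  unfold IsPermLattice
  refine and_congr (forall₂_congr fun i _ => forall_congr' fun hi => ?_)
    (forall₂_congr fun i _ => forall_congr' fun hi => ?_)
  · rw [update_of_ne (by omega)]
  · simp only [hatCount_update_of_le hi]

def IsPartition (l : ℕ →₀ ℕ) : Prop := l 0 = 0 ∧ ∀ r, 1 ≤ r → l (r + 1) ≤ l r

def removable (l : ℕ →₀ ℕ) : Finset ℕ := l.support.filter fun s => l (s + 1) < l s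

def addable (l : ℕ →₀ ℕ) : Finset ℕ := insert 1 ((removable l).map (addRightEmbedding 1))

lemma mem_removable : s ∈ removable l ↔ l (s + 1) < l s := by
  simp only [removable, mem_filter, Finsupp.mem_support_iff]
  omega

lemma pos_of_mem_removable (hl0 : l 0 = 0) (hs : s ∈ removable l) : 0 < s := by
  rw [mem_removable] at hs
  exact Nat.pos_of_ne_zero fun h => by subst h; omega

lemma mem_addable : r ∈ addable l ↔ r = 1 ∨ 0 < r ∧ l r < l (r - 1) := by
  simp only [addable, mem_insert, mem_map, addRightEmbedding_apply, mem_removable]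
  constructor
  · rintro (h | ⟨s, hs, rfl⟩)
    · exact .inl h
    · exact .inr ⟨by omega, by simpa using hs⟩
  · rintro (h | ⟨hr, hlt⟩)
    · exact .inl h
    · exact .inr ⟨r - 1, by rwa [Nat.sub_add_cancel hr], Nat.sub_add_cancel hr⟩

lemma card_addable (hl0 : l 0 = 0) : #(addable l) = #(removable l) + 1 := by
  rw [addable, card_insert_of_notMem, card_map]
  simp only [mem_map, addRightEmbedding_apply, mem_removable, not_exists, not_and]
  intro s hs hs1
  obtain rfl : s = 0 := by omega
  omega

lemma single_le_of_mem_removable (hs : s ∈ removable l) : single s 1 ≤ l :=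
  Finsupp.single_le_iff.2 (by rw [mem_removable] at hs; omega)

lemma IsPartition.sub_single (hl : IsPartition l) (hs : s ∈ removable l) :
    IsPartition (l - single s 1) := by
  rw [mem_removable] at hs
  refine ⟨by simp [hl.1], fun t ht => ?_⟩
  have := hl.2 t ht
  simp only [Finsupp.coe_tsub, Pi.sub_apply, Finsupp.single_apply]
  split_ifs <;> subst_vars <;> omega

lemma IsPartition.add_single (hl : IsPartition l) (hr : r ∈ addable l) :
    IsPartition (l + single r 1) := by
  rw [mem_addable] at hr
  obtain ⟨t, rfl⟩ : ∃ t, r = t + 1 := ⟨r - 1, by omega⟩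
  refine ⟨by simp [hl.1], fun u hu => ?_⟩
  have := hl.2 u hu
  simp only [Finsupp.coe_add, Pi.add_apply, Finsupp.single_apply, Nat.add_sub_cancel,
    add_left_inj] at hr ⊢
  split_ifs <;> subst_vars <;> omega

lemma IsPartition.mem_removable_add_single (hl : IsPartition l) (hr : r ∈ addable l) :
    r ∈ removable (l + single r 1) := by
  rw [mem_addable] at hr
  have := hl.2 r (by omega)
  simp only [mem_removable, Finsupp.coe_add, Pi.add_apply, Finsupp.single_apply]
  split_ifs <;> omega

lemma IsPartition.mem_addable_sub_single (hl : IsPartition l) (hs : s ∈ removable l) :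
    s ∈ addable (l - single s 1) := by
  obtain ⟨t, rfl⟩ : ∃ t, s = t + 1 :=
    ⟨s - 1, by have := pos_of_mem_removable hl.1 hs; omega⟩
  rw [mem_removable] at hs
  rw [mem_addable, Nat.add_sub_cancel]
  rcases t with _ | t
  · exact .inl rfl
  · have := hl.2 (t + 1) (by omega)
    simp only [Finsupp.coe_tsub, Pi.sub_apply, Finsupp.single_apply]
    split_ifs <;> omega

lemma mem_addable_and_mem_erase_removable_iff (hl0 : l 0 = 0) :
    r ∈ addable l ∧ s ∈ (removable (l + single r 1)).erase r ↔
      r ∈ (addable (l - single s 1)).erase s ∧ s ∈ removable l := by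
  simp only [mem_erase, mem_addable, mem_removable]
  rcases r with _ | t
  · simp
  · simp only [Finsupp.coe_add, Finsupp.coe_tsub, Pi.add_apply, Pi.sub_apply,
      Finsupp.single_apply, Nat.add_sub_cancel]
    rcases s with _ | s
    · simp [hl0]
    · split_ifs <;> subst_vars <;> omega

lemma add_single_sub_single_comm (hrs : r ≠ s) :
    l + single r 1 - single s 1 = l - single s 1 + single r 1 := by
  ext t
  simp only [Finsupp.coe_add, Finsupp.coe_tsub, Pi.add_apply, Pi.sub_apply, Finsupp.single_apply]
  split_ifs <;> omega

-- The commutation relation `DU = UD + 1` of the up and down operators on Young's lattice.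
theorem sum_addable_sum_removable {M : Type*} [AddCommMonoid M] (F : (ℕ →₀ ℕ) → M)
    (hl : IsPartition l) :
    ∑ r ∈ addable l, ∑ s ∈ removable (l + single r 1), F (l + single r 1 - single s 1) =
      F l + ∑ s ∈ removable l, ∑ t ∈ addable (l - single s 1),
        F (l - single s 1 + single t 1) := by
  have hU : ∀ r ∈ addable l,
      ∑ s ∈ removable (l + single r 1), F (l + single r 1 - single s 1) =
        F l + ∑ s ∈ (removable (l + single r 1)).erase r, F (l + single r 1 - single s 1) :=
    fun r hr => by
      rw [← add_sum_erase _ _ (hl.mem_removable_add_single hr), add_tsub_cancel_right]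
  have hD : ∀ s ∈ removable l,
      ∑ t ∈ addable (l - single s 1), F (l - single s 1 + single t 1) =
        F l + ∑ t ∈ (addable (l - single s 1)).erase s, F (l - single s 1 + single t 1) :=
    fun s hs => by
      rw [← add_sum_erase _ _ (hl.mem_addable_sub_single hs),
        tsub_add_cancel_of_le (single_le_of_mem_removable hs)]
  have hswap : ∑ r ∈ addable l, ∑ s ∈ (removable (l + single r 1)).erase r,
        F (l + single r 1 - single s 1) =
      ∑ s ∈ removable l, ∑ t ∈ (addable (l - single s 1)).erase s,
        F (l - single s 1 + single t 1) := by
    rw [sum_comm' (t' := removable l) (s' := fun s => (addable (l - single s 1)).erase s)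
      fun r s => mem_addable_and_mem_erase_removable_iff hl.1]
    refine sum_congr rfl fun s _ => sum_congr rfl fun r hr => ?_
    rw [add_single_sub_single_comm (mem_erase.1 hr).1]
  rw [sum_congr rfl hU, sum_congr rfl hD, sum_add_distrib, sum_add_distrib, hswap, sum_const,
    sum_const, card_addable hl.1, succ_nsmul']
  abel

lemma degree_add_single (l : ℕ →₀ ℕ) (r : ℕ) :
    (l + single r 1).degree = l.degree + 1 := by
  rw [map_add, Finsupp.degree_single]

lemma degree_sub_single_add_one (hs : s ∈ removable l) :
    (l - single s 1).degree + 1 = l.degree := by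
  rw [← degree_add_single, tsub_add_cancel_of_le (single_le_of_mem_removable hs)]

lemma removable_eq_empty_of_degree_eq_zero (h : l.degree = 0) : removable l = ∅ := by
  rw [(Finsupp.degree_eq_zero_iff l).1 h]
  rfl

-- The alphabet `A` is `Set.univ` for all permutation lattices and `Set.Ioi 0` for standard
-- Young tableaux.
def permLattices (A : Set ℤ) (f : ℕ) (l : ℕ →₀ ℕ) : Set (ℕ → ℤ) :=
  {w | IsPermLattice f w ∧ (∀ j, j = 0 ∨ f < j → w j = 0) ∧
    (∀ r : ℕ, 1 ≤ r → hatCount w f r = l r) ∧ ∀ j, 1 ≤ j → j ≤ f → w j ∈ A}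

lemma degree_le_of_mem_permLattices (hl0 : l 0 = 0) (hw : w ∈ permLattices A f l) :
    l.degree ≤ f := by
  have hdeg : (l.degree : ℤ) = ∑ r ∈ l.support, hatCount w f r := by
    rw [Finsupp.degree_apply, Nat.cast_sum]
    refine sum_congr rfl fun r hr => (hw.2.2.1 r ?_).symm
    rw [Finsupp.mem_support_iff] at hr
    exact Nat.one_le_iff_ne_zero.2 fun h => hr (h ▸ hl0)
  have := sum_hatCount_le w l.support f
  omega

lemma permLattices_eq_empty_of_lt_degree (hl0 : l 0 = 0) (h : f < l.degree) :
    permLattices A f l = ∅ :=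
  Set.eq_empty_of_forall_notMem fun _ hw => (degree_le_of_mem_permLattices hl0 hw).not_gt h

lemma update_zero_mem_permLattices {m : ℕ →₀ ℕ} (hw : w ∈ permLattices A (f + 1) l)
    (hm : ∀ r : ℕ, 1 ≤ r → hatCount w f r = m r) :
    update w (f + 1) 0 ∈ permLattices A f m := by
  obtain ⟨hlat, hsupp, -, hA⟩ := hw
  refine ⟨isPermLattice_update_iff.2 (isPermLattice_succ_iff.1 hlat).1, fun j hj => ?_,
    fun r hr => by rw [hatCount_update_of_le le_rfl, hm r hr], fun j h1 h2 => ?_⟩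
  · rw [update_apply]
    split_ifs
    exacts [rfl, hsupp j (by omega)]
  · rw [update_of_ne (by omega)]
    exact hA j h1 (by omega)

lemma update_mem_permLattices {m : ℕ →₀ ℕ} {c : ℤ} (hv : v ∈ permLattices A f m)
    (hc : c ≠ 0) (hcA : c ∈ A) (hl : IsPartition l)
    (hlm : ∀ r : ℕ, 1 ≤ r →
      (l r : ℤ) = m r + (if c = r then 1 else 0) - (if c = -r then 1 else 0)) :
    update v (f + 1) c ∈ permLattices A (f + 1) l := by
  obtain ⟨hlat, hsupp, hdiag, hA⟩ := hv
  have hdiag' : ∀ r : ℕ, 1 ≤ r → hatCount (update v (f + 1) c) (f + 1) r = l r :=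
    fun r hr => by
      rw [hatCount_update_succ, hdiag r hr, hlm r hr]
  refine ⟨isPermLattice_succ_iff.2
      ⟨isPermLattice_update_iff.2 hlat, by simpa, fun k hk => ?_⟩,
    fun j hj => ?_, hdiag', fun j h1 h2 => ?_⟩
  · lift k to ℕ using (by omega)
    have hk' := hdiag' (k + 1) (by omega)
    push_cast at hk'
    rw [hk', hdiag' k (by exact_mod_cast hk)]
    exact ⟨by exact_mod_cast hl.2 k (by exact_mod_cast hk), by positivity⟩
  · rw [update_of_ne (by omega)]
    exact hsupp j (by omega)
  · rw [update_apply]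
    split_ifs
    exacts [hcA, hA j h1 (by omega)]

lemma hatCount_eq_of_mem_permLattices_succ (hw : w ∈ permLattices A (f + 1) l) (hr : 1 ≤ r) :
    hatCount w f r =
      l r - (if w (f + 1) = r then 1 else 0) + (if w (f + 1) = -r then 1 else 0) := by
  have := hatCount_succ w f r
  rw [hw.2.2.1 r hr] at this
  omega

lemma removable_of_mem_permLattices_succ (hw : w ∈ permLattices A (f + 1) l)
    (hs : w (f + 1) = s) (hs1 : 1 ≤ s) :
    s ∈ removable l ∧ update w (f + 1) 0 ∈ permLattices A f (l - single s 1) := by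
  have hlat : IsPermLattice f w := (isPermLattice_succ_iff.1 hw.1).1
  have hpre : ∀ t : ℕ, 1 ≤ t → hatCount w f t = l t - if s = t then 1 else 0 :=
    fun t ht => by
      rw [hatCount_eq_of_mem_permLattices_succ hw ht, hs]
      split_ifs <;> omega
  have hnonneg := hlat.hatCount_nonneg (k := s) (by exact_mod_cast hs1)
  have hle := hlat.hatCount_succ_le (k := s) (by exact_mod_cast hs1)
  rw [hpre s hs1, if_pos rfl] at hnonneg
  rw [hpre s hs1, ← Nat.cast_one, ← Nat.cast_add, hpre (s + 1) (by omega), if_pos rfl,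
    if_neg (by omega)] at hle
  refine ⟨mem_removable.2 (by omega), update_zero_mem_permLattices hw fun t ht => ?_⟩
  rw [hpre t ht]
  simp only [Finsupp.coe_tsub, Pi.sub_apply, Finsupp.single_apply]
  split_ifs with h
  · subst h
    omega
  · simp

lemma addable_of_mem_permLattices_succ (hw : w ∈ permLattices A (f + 1) l)
    (hr : w (f + 1) = -r) (hr1 : 1 ≤ r) :
    r ∈ addable l ∧ update w (f + 1) 0 ∈ permLattices A f (l + single r 1) := by
  have hlat : IsPermLattice f w := (isPermLattice_succ_iff.1 hw.1).1
  have hpre : ∀ t : ℕ, 1 ≤ t → hatCount w f t = l t + if r = t then 1 else 0 :=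
    fun t ht => by
      rw [hatCount_eq_of_mem_permLattices_succ hw ht, hr]
      split_ifs <;> omega
  refine ⟨mem_addable.2 ?_, update_zero_mem_permLattices hw fun t ht => ?_⟩
  · obtain ⟨t, rfl⟩ : ∃ t, r = t + 1 := ⟨r - 1, by omega⟩
    rcases t with _ | t
    · exact .inl rfl
    · have hle := hlat.hatCount_succ_le (k := t + 1) (by omega)
      rw [← Nat.cast_one, ← Nat.cast_add, ← Nat.cast_add, hpre (t + 1 + 1) (by omega),
        hpre (t + 1) (by omega), if_pos rfl, if_neg (by omega)] at hle
      exact .inr ⟨by omega, by rw [Nat.add_sub_cancel]; omega⟩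
  · rw [hpre t ht]
    simp only [Finsupp.coe_add, Pi.add_apply, Finsupp.single_apply]
    split_ifs <;> simp

theorem permLattices_succ_eq [DecidablePred (· ∈ A)] (hl : IsPartition l) :
    permLattices A (f + 1) l =
      (⋃ s ∈ (removable l).filter (fun s : ℕ => (s : ℤ) ∈ A),
        (update · (f + 1) (s : ℤ)) '' permLattices A f (l - single s 1)) ∪
      (⋃ r ∈ (addable l).filter (fun r : ℕ => -(r : ℤ) ∈ A),
        (update · (f + 1) (-r : ℤ)) '' permLattices A f (l + single r 1)) := by
  ext w
  simp only [Set.mem_union, Set.mem_iUnion, Set.mem_image, mem_filter, exists_prop]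
  constructor
  · intro hw
    have hback : ∀ c, c = w (f + 1) → update (update w (f + 1) 0) (f + 1) c = w := by
      rintro _ rfl
      rw [update_idem, update_eq_self]
    have hlastA := hw.2.2.2 (f + 1) le_add_self le_rfl
    rcases lt_trichotomy (w (f + 1)) 0 with hneg | hzero | hpos
    · obtain ⟨r, hr⟩ : ∃ r : ℕ, w (f + 1) = -r := ⟨(-w (f + 1)).toNat, by omega⟩
      obtain ⟨hadd, hmem⟩ := addable_of_mem_permLattices_succ hw hr (by omega)
      exact .inr ⟨r, ⟨hadd, hr ▸ hlastA⟩, _, hmem, hback _ hr.symm⟩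
    · exact absurd hzero (hw.1.1 (f + 1) le_add_self le_rfl)
    · obtain ⟨s, hs⟩ : ∃ s : ℕ, w (f + 1) = s := ⟨(w (f + 1)).toNat, by omega⟩
      obtain ⟨hrem, hmem⟩ := removable_of_mem_permLattices_succ hw hs (by omega)
      exact .inl ⟨s, ⟨hrem, hs ▸ hlastA⟩, _, hmem, hback _ hs.symm⟩
  · rintro (⟨s, ⟨hs, hsA⟩, v, hv, rfl⟩ | ⟨r, ⟨hr, hrA⟩, v, hv, rfl⟩)
    · refine update_mem_permLattices hv (by exact_mod_cast (pos_of_mem_removable hl.1 hs).ne')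
        hsA hl fun t ht => ?_
      have := (mem_removable.1 hs)
      simp only [Finsupp.coe_tsub, Pi.sub_apply, Finsupp.single_apply]
      split_ifs <;> subst_vars <;> omega
    · have hr0 : r ≠ 0 := by rintro rfl; simp [mem_addable] at hr
      refine update_mem_permLattices hv (by simpa using hr0) hrA hl fun t ht => ?_
      simp only [Finsupp.coe_add, Pi.add_apply, Finsupp.single_apply]
      split_ifs <;> subst_vars <;> push_cast <;> omega

theorem permLattices_finite :
    ∀ (f : ℕ) {l : ℕ →₀ ℕ}, IsPartition l → (permLattices A f l).Finite
  | 0, _, _ =>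
    (Set.finite_singleton (0 : ℕ → ℤ)).subset fun _ hw => funext fun j => hw.2.1 j (by omega)
  | f + 1, l, hl => by
    classical
    rw [permLattices_succ_eq hl]
    exact ((finite_toSet _).biUnion fun s hs =>
        (permLattices_finite f (hl.sub_single (mem_filter.1 hs).1)).image _).union
      ((finite_toSet _).biUnion fun r hr =>
        (permLattices_finite f (hl.add_single (mem_filter.1 hr).1)).image _)

lemma ncard_biUnion_image_update {ι : Type*} (I : Finset ι) (n : ℕ) {c : ι → ℤ}
    (hc : Set.InjOn c I) {S : ι → Set (ℕ → ℤ)} (hS : ∀ i ∈ I, (S i).Finite)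
    (hS0 : ∀ i ∈ I, ∀ v ∈ S i, v n = 0) :
    (⋃ i ∈ I, (update · n (c i)) '' S i).ncard = ∑ i ∈ I, (S i).ncard := by
  rw [← set_biUnion_coe, Set.Finite.ncard_biUnion I.finite_toSet (fun i hi => (hS i hi).image _),
    finsum_mem_coe_finset]
  · refine sum_congr rfl fun i hi => Set.InjOn.ncard_image fun v hv v' hv' h => ?_
    have hinv : ∀ u ∈ S i, update (update u n (c i)) n 0 = u := fun u hu => by
      rw [update_idem, ← hS0 i hi u hu, update_eq_self]
    rw [← hinv v hv, ← hinv v' hv']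
    exact congrArg (update · n 0) h
  · intro i hi j hj hij
    refine Set.disjoint_left.2 ?_
    rintro _ ⟨v, -, rfl⟩ ⟨v', -, h⟩
    exact hij (hc hi hj (by simpa using (congrFun h n).symm))

theorem ncard_permLattices_succ [DecidablePred (· ∈ A)] (hl : IsPartition l) :
    (permLattices A (f + 1) l).ncard =
      ∑ s ∈ (removable l).filter (fun s : ℕ => (s : ℤ) ∈ A),
          (permLattices A f (l - single s 1)).ncard +
        ∑ r ∈ (addable l).filter (fun r : ℕ => -(r : ℤ) ∈ A),
          (permLattices A f (l + single r 1)).ncard := by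
  have hfin := permLattices_finite (A := A) (f + 1) hl
  have hvanish : ∀ m : ℕ →₀ ℕ, ∀ v ∈ permLattices A f m, v (f + 1) = 0 :=
    fun _ v hv => hv.2.1 _ (.inr (by omega))
  rw [permLattices_succ_eq hl] at hfin ⊢
  rw [Set.ncard_union_eq ?_ (hfin.subset Set.subset_union_left)
      (hfin.subset Set.subset_union_right),
    ncard_biUnion_image_update _ _ (Nat.cast_injective.injOn)
      (fun s hs => permLattices_finite f (hl.sub_single (mem_filter.1 hs).1))
      (fun _ _ => hvanish _),
    ncard_biUnion_image_update _ _ (c := fun r : ℕ => -(r : ℤ))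
      (fun _ _ _ _ h => by simpa using h)
      (fun r hr => permLattices_finite f (hl.add_single (mem_filter.1 hr).1))
      (fun _ _ => hvanish _)]
  refine Set.disjoint_left.2 fun w hw hw' => ?_
  simp only [Set.mem_iUnion, Set.mem_image, mem_filter] at hw hw'
  obtain ⟨s, ⟨hs, -⟩, v, -, rfl⟩ := hw
  obtain ⟨r, -, v', -, h⟩ := hw'
  have := congrFun h (f + 1)
  simp only [update_self] at this
  have := pos_of_mem_removable hl.1 hs
  omega

theorem ncard_permLattices_univ_succ (hl : IsPartition l) :
    (permLattices Set.univ (f + 1) l).ncard =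
      ∑ s ∈ removable l, (permLattices Set.univ f (l - single s 1)).ncard +
        ∑ r ∈ addable l, (permLattices Set.univ f (l + single r 1)).ncard := by
  classical
  simpa using ncard_permLattices_succ (A := Set.univ) (f := f) hl

theorem ncard_permLattices_pos_succ (hl : IsPartition l) :
    (permLattices (Set.Ioi 0) (f + 1) l).ncard =
      ∑ s ∈ removable l, (permLattices (Set.Ioi 0) f (l - single s 1)).ncard := by
  classical
  rw [ncard_permLattices_succ hl,
    filter_true_of_mem fun s hs => Set.mem_Ioi.2 (mod_cast pos_of_mem_removable hl.1 hs),
    filter_false_of_mem fun r _ => by simp, sum_empty, add_zero]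

lemma sum_addable_ncard_pos_eq (hl : IsPartition l) (n : ℕ) :
    ∑ r ∈ addable l, (permLattices (Set.Ioi 0) (n + 1) (l + single r 1)).ncard =
      (permLattices (Set.Ioi 0) n l).ncard +
        ∑ s ∈ removable l, ∑ t ∈ addable (l - single s 1),
          (permLattices (Set.Ioi 0) n (l - single s 1 + single t 1)).ncard := by
  rw [← sum_addable_sum_removable (fun m => (permLattices (Set.Ioi 0) n m).ncard) hl]
  exact sum_congr rfl fun r hr => ncard_permLattices_pos_succ (hl.add_single hr)

theorem sum_addable_ncard_pos :
    ∀ (n : ℕ) {l : ℕ →₀ ℕ}, IsPartition l → l.degree = n →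
    ∑ r ∈ addable l, (permLattices (Set.Ioi 0) (n + 1) (l + single r 1)).ncard =
      (n + 1) * (permLattices (Set.Ioi 0) n l).ncard
  | 0, l, hl, hn => by
    rw [sum_addable_ncard_pos_eq hl, removable_eq_empty_of_degree_eq_zero hn]
    simp
  | n + 1, l, hl, hn => by
    rw [sum_addable_ncard_pos_eq hl, sum_congr rfl fun s hs => sum_addable_ncard_pos n
        (hl.sub_single hs) (by have := degree_sub_single_add_one hs; omega),
      ← mul_sum, ← ncard_permLattices_pos_succ hl]
    ring

def CardFormula (f : ℕ) : Prop :=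
  ∀ n k (l : ℕ →₀ ℕ), n + 2 * k = f → IsPartition l → l.degree = n →
    (permLattices Set.univ f l).ncard * (n ! * 2 ^ k * k !) =
      f ! * (permLattices (Set.Ioi 0) n l).ncard

lemma cardFormula_zero : CardFormula 0 := by
  intro n k l h _ _
  obtain ⟨rfl, rfl⟩ : n = 0 ∧ k = 0 := by omega
  simp only [Nat.factorial_zero, pow_zero, mul_one, one_mul]
  congr 1
  ext w
  exact and_congr_right' <| and_congr_right' <| and_congr_right'
    ⟨fun _ j h1 h2 => by omega, fun _ _ _ _ => trivial⟩

lemma CardFormula.sum_removable (ih : CardFormula f) {n k : ℕ} (hf : n + 2 * k = f + 1)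
    (hl : IsPartition l) (hn : l.degree = n) :
    (∑ s ∈ removable l, (permLattices Set.univ f (l - single s 1)).ncard) *
        (n ! * 2 ^ k * k !) =
      n * (f ! * (permLattices (Set.Ioi 0) n l).ncard) := by
  rcases n with _ | m
  · simp [removable_eq_empty_of_degree_eq_zero hn]
  · rw [sum_mul, ncard_permLattices_pos_succ hl, mul_sum, mul_sum]
    refine sum_congr rfl fun s hs => ?_
    have := ih m k _ (by omega) (hl.sub_single hs)
      (by have := degree_sub_single_add_one hs; omega)
    rw [Nat.factorial_succ, ← this]
    ring

lemma CardFormula.sum_addable (ih : CardFormula f) {n k : ℕ} (hf : n + 2 * k = f + 1)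
    (hl : IsPartition l) (hn : l.degree = n) :
    (∑ r ∈ addable l, (permLattices Set.univ f (l + single r 1)).ncard) * (n ! * 2 ^ k * k !) =
      2 * k * (f ! * (permLattices (Set.Ioi 0) n l).ncard) := by
  rcases k with _ | k
  · rw [sum_eq_zero fun r hr => by
      rw [permLattices_eq_empty_of_lt_degree (hl.add_single hr).1
        (by rw [degree_add_single]; omega), Set.ncard_empty]]
    simp
  · refine Nat.eq_of_mul_eq_mul_left (Nat.succ_pos n) ?_
    calc (n + 1) * ((∑ r ∈ addable l, (permLattices Set.univ f (l + single r 1)).ncard) *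
            (n ! * 2 ^ (k + 1) * (k + 1)!))
        = 2 * (k + 1) * ((∑ r ∈ addable l, (permLattices Set.univ f (l + single r 1)).ncard) *
            ((n + 1)! * 2 ^ k * k !)) := by
          rw [Nat.factorial_succ n, Nat.factorial_succ k, pow_succ]
          ring
      _ = 2 * (k + 1) * (f ! * ∑ r ∈ addable l,
            (permLattices (Set.Ioi 0) (n + 1) (l + single r 1)).ncard) := by
          rw [sum_mul, mul_sum _ _ (f !)]
          exact congrArg (2 * (k + 1) * ·) (sum_congr rfl fun r hr => ih (n + 1) k _ (by omega)
            (hl.add_single hr) (by rw [degree_add_single, hn]))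
      _ = (n + 1) * (2 * (k + 1) * (f ! * (permLattices (Set.Ioi 0) n l).ncard)) := by
          rw [sum_addable_ncard_pos n hl hn]
          ring

lemma CardFormula.succ (ih : CardFormula f) : CardFormula (f + 1) := by
  intro n k l hf hl hn
  rw [ncard_permLattices_univ_succ hl, add_mul, ih.sum_removable hf hl hn,
    ih.sum_addable hf hl hn, Nat.factorial_succ, ← hf]
  ring

theorem cardFormula : ∀ f, CardFormula f
  | 0 => cardFormula_zero
  | f + 1 => (cardFormula f).succ

end PermLattice

/-- Let `2k ≤ f` and let `λ` be a partition with `|λ| = f − 2k`.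
Then the number of permutation lattices of order `f` with diagram `λ` equals
`f! / ((f−2k)!·2^k·k!)` times the number of permutation lattices of order `f−2k` with
diagram `λ` all of whose entries are positive (i.e. the number of standard Young
tableaux of shape `λ`).  To avoid division, the identity is stated in the multiplied
form `#S · (f−2k)! · 2^k · k! = f! · #T`.  (Words are normalized to vanish outside the
index range `{1,…,order}`, so that each permutation lattice has a unique
representative and the sets below are in bijection with the sets of lattices.) -/
theorem card_permLattices (f k : ℕ) (hk : 2 * k ≤ f)
    (lam : ℕ →₀ ℕ) (hlam0 : lam 0 = 0)
    (hlam : ∀ r : ℕ, 1 ≤ r → lam (r + 1) ≤ lam r)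
    (hsize : (lam.sum fun _ n => n) = f - 2 * k) :
    ({w : ℕ → ℤ | IsPermLattice f w ∧ (∀ j, j = 0 ∨ f < j → w j = 0) ∧
        ∀ r : ℕ, 1 ≤ r → hatCount w f (r : ℤ) = (lam r : ℤ)}.ncard)
      * ((f - 2 * k).factorial * 2 ^ k * k.factorial) =
    f.factorial *
      ({w : ℕ → ℤ | IsPermLattice (f - 2 * k) w ∧
        (∀ j, j = 0 ∨ f - 2 * k < j → w j = 0) ∧
        (∀ r : ℕ, 1 ≤ r → hatCount w (f - 2 * k) (r : ℤ) = (lam r : ℤ)) ∧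
        ∀ j, 1 ≤ j → j ≤ f - 2 * k → 0 < w j}.ncard) := by
  have key := PermLattice.cardFormula f (f - 2 * k) k lam (by omega) ⟨hlam0, hlam⟩ hsize
  convert key using 3
  · ext w
    simp [PermLattice.permLattices]
  · rfl
end

section
/- Let K be a field, x ∈ K with x ≠ 0, let V and W be finite-dimensional K-vector spaces, and let A : V → V and B : W → W be linear maps with A² = x·A and B² = x·B. Let Ω̄ : V ⊗ W → V ⊗ W be the linear map Ω̄ = id_V ⊗ B − A ⊗ id_W. Then the kernel of Ω̄ equals the sum (in fact internal direct sum) of the two subspaces (ker A) ⊗ (ker B) and E_x(A) ⊗ E_x(B) of V ⊗ W, where E_x(T) = ker(T − x·id) and, for subspaces U ⊆ V, U' ⊆ W, the subspace U ⊗ U' of V ⊗ W means the image of the induced map on tensor products. -/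
open TensorProduct LinearMap

section aux
variable {K V W : Type*} [Field K] [AddCommGroup V] [Module K V]
  [AddCommGroup W] [Module K W]

lemma range_map_le_range_mapIncl (f : V →ₗ[K] V) (g : W →ₗ[K] W)
    (U : Submodule K V) (U' : Submodule K W)
    (hf : ∀ v, f v ∈ U) (hg : ∀ w, g w ∈ U') :
    LinearMap.range (TensorProduct.map f g) ≤ LinearMap.range (TensorProduct.mapIncl U U') := by
  rintro _ ⟨t, rfl⟩
  refine ⟨TensorProduct.map (f.codRestrict U hf) (g.codRestrict U' hg) t, ?_⟩
  have h : TensorProduct.mapIncl U U' ∘ₗ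
      TensorProduct.map (f.codRestrict U hf) (g.codRestrict U' hg)
      = TensorProduct.map f g := by
    rw [TensorProduct.mapIncl, ← TensorProduct.map_comp]
    congr 1
  exact DFunLike.congr_fun h t

lemma rTensor_apply_mapIncl_ker (A : V →ₗ[K] V) (B : W →ₗ[K] W)
    (s : (LinearMap.ker A) ⊗[K] (LinearMap.ker B)) :
    LinearMap.rTensor W A (TensorProduct.mapIncl (LinearMap.ker A) (LinearMap.ker B) s) = 0 := by
  induction s using TensorProduct.induction_on with
  | zero => simp
  | tmul v w => simp [TensorProduct.mapIncl, v.2.out]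
  | add a b ha hb => rw [map_add, map_add, ha, hb, add_zero]

lemma lTensor_apply_mapIncl_ker (A : V →ₗ[K] V) (B : W →ₗ[K] W)
    (s : (LinearMap.ker A) ⊗[K] (LinearMap.ker B)) :
    LinearMap.lTensor V B (TensorProduct.mapIncl (LinearMap.ker A) (LinearMap.ker B) s) = 0 := by
  induction s using TensorProduct.induction_on with
  | zero => simp
  | tmul v w => simp [TensorProduct.mapIncl, w.2.out]
  | add a b ha hb => rw [map_add, map_add, ha, hb, add_zero]

lemma rTensor_apply_mapIncl_eigen (A : V →ₗ[K] V) (B : W →ₗ[K] W) (x : K)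
    (s : (Module.End.eigenspace A x) ⊗[K] (Module.End.eigenspace B x)) :
    LinearMap.rTensor W A
      (TensorProduct.mapIncl (Module.End.eigenspace A x) (Module.End.eigenspace B x) s)
      = x • TensorProduct.mapIncl (Module.End.eigenspace A x) (Module.End.eigenspace B x) s := by
  induction s using TensorProduct.induction_on with
  | zero => simp
  | tmul v w =>
      have hv : A v.1 = x • v.1 := Module.End.mem_eigenspace_iff.mp v.2
      simp [TensorProduct.mapIncl, hv, TensorProduct.smul_tmul']
  | add a b ha hb => rw [map_add, map_add, ha, hb, smul_add]

lemma lTensor_apply_mapIncl_eigen (A : V →ₗ[K] V) (B : W →ₗ[K] W) (x : K)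
    (s : (Module.End.eigenspace A x) ⊗[K] (Module.End.eigenspace B x)) :
    LinearMap.lTensor V B
      (TensorProduct.mapIncl (Module.End.eigenspace A x) (Module.End.eigenspace B x) s)
      = x • TensorProduct.mapIncl (Module.End.eigenspace A x) (Module.End.eigenspace B x) s := by
  induction s using TensorProduct.induction_on with
  | zero => simp
  | tmul v w =>
      have hw : B w.1 = x • w.1 := Module.End.mem_eigenspace_iff.mp w.2
      simp [TensorProduct.mapIncl, hw, TensorProduct.tmul_smul]
  | add a b ha hb => rw [map_add, map_add, ha, hb, smul_add]

end aux

/-- Let `K` be a field, `x ∈ K` nonzero, `V, W` finite dimensional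
`K`-vector spaces, and `A : V → V`, `B : W → W` linear with `A² = x·A` and `B² = x·B`.
Then the kernel of `Ω̄ = id_V ⊗ B − A ⊗ id_W` on `V ⊗ W` is the sum — in fact the
internal direct sum, the two summands being disjoint — of the subspaces
`(ker A) ⊗ (ker B)` and `E_x(A) ⊗ E_x(B)` (images in `V ⊗ W` of the canonical maps on
tensor products of the corresponding subspaces). -/
theorem ker_intertwiner_e (K : Type*) [Field K] (x : K) (hx : x ≠ 0)
    (V W : Type*) [AddCommGroup V] [Module K V] [AddCommGroup W] [Module K W]
    [FiniteDimensional K V] [FiniteDimensional K W]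
    (A : V →ₗ[K] V) (B : W →ₗ[K] W)
    (hA : A ∘ₗ A = x • A) (hB : B ∘ₗ B = x • B) :
    LinearMap.ker (LinearMap.lTensor V B - LinearMap.rTensor W A) =
      LinearMap.range (TensorProduct.mapIncl (LinearMap.ker A) (LinearMap.ker B)) ⊔
        LinearMap.range
          (TensorProduct.mapIncl (Module.End.eigenspace A x) (Module.End.eigenspace B x)) ∧
    Disjoint
      (LinearMap.range (TensorProduct.mapIncl (LinearMap.ker A) (LinearMap.ker B)))
      (LinearMap.range
        (TensorProduct.mapIncl (Module.End.eigenspace A x) (Module.End.eigenspace B x))) := by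
  constructor
  · apply le_antisymm
    · -- hard direction
      intro t ht
      have ht' : LinearMap.lTensor V B t = LinearMap.rTensor W A t := by
        have := LinearMap.mem_ker.mp ht
        rw [LinearMap.sub_apply, sub_eq_zero] at this
        exact this
      -- key squared identities at tensor level
      have hAA : LinearMap.rTensor W A (LinearMap.rTensor W A t) = x • LinearMap.rTensor W A t := by
        rw [← LinearMap.comp_apply, ← LinearMap.rTensor_comp, hA, LinearMap.rTensor_smul,
          LinearMap.smul_apply]
      set pt : V ⊗[K] W := x⁻¹ • LinearMap.rTensor W A t with hpt
      -- t - pt lands in ker⊗ker component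
      have h1 : t - pt ∈ LinearMap.range
          (TensorProduct.map (LinearMap.id - x⁻¹ • A) (LinearMap.id - x⁻¹ • B)) := by
        refine ⟨t, ?_⟩
        rw [← LinearMap.rTensor_comp_lTensor, LinearMap.comp_apply,
          LinearMap.lTensor_sub, LinearMap.lTensor_smul, LinearMap.lTensor_id,
          LinearMap.rTensor_sub, LinearMap.rTensor_smul, LinearMap.rTensor_id]
        simp only [LinearMap.sub_apply, LinearMap.id_apply, LinearMap.smul_apply]
        rw [ht']
        rw [map_sub, map_smul, hAA]
        rw [smul_smul, inv_mul_cancel₀ hx, one_smul, sub_self, smul_zero, sub_zero, ← hpt]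
      have h2 : pt ∈ LinearMap.range
          (TensorProduct.map (x⁻¹ • A) (x⁻¹ • B)) := by
        refine ⟨t, ?_⟩
        rw [← LinearMap.rTensor_comp_lTensor, LinearMap.comp_apply,
          LinearMap.lTensor_smul, LinearMap.rTensor_smul]
        simp only [LinearMap.smul_apply]
        rw [ht', map_smul, hAA, smul_smul, smul_smul]
        have hxx : x⁻¹ * x⁻¹ * x = x⁻¹ := by field_simp
        rw [hxx, ← hpt]
      have hk1 : ∀ v, (LinearMap.id - x⁻¹ • A : V →ₗ[K] V) v ∈ LinearMap.ker A := by
        intro v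
        have := DFunLike.congr_fun hA v
        simp only [LinearMap.comp_apply, LinearMap.smul_apply] at this
        simp [LinearMap.mem_ker, map_sub, map_smul, this, smul_smul, inv_mul_cancel₀ hx]
      have hk2 : ∀ w, (LinearMap.id - x⁻¹ • B : W →ₗ[K] W) w ∈ LinearMap.ker B := by
        intro w
        have := DFunLike.congr_fun hB w
        simp only [LinearMap.comp_apply, LinearMap.smul_apply] at this
        simp [LinearMap.mem_ker, map_sub, map_smul, this, smul_smul, inv_mul_cancel₀ hx]
      have he1 : ∀ v, (x⁻¹ • A : V →ₗ[K] V) v ∈ Module.End.eigenspace A x := by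
        intro v
        have := DFunLike.congr_fun hA v
        simp only [LinearMap.comp_apply, LinearMap.smul_apply] at this
        rw [Module.End.mem_eigenspace_iff]
        simp only [LinearMap.smul_apply]
        rw [map_smul, this, smul_comm]
      have he2 : ∀ w, (x⁻¹ • B : W →ₗ[K] W) w ∈ Module.End.eigenspace B x := by
        intro w
        have := DFunLike.congr_fun hB w
        simp only [LinearMap.comp_apply, LinearMap.smul_apply] at this
        rw [Module.End.mem_eigenspace_iff]
        simp only [LinearMap.smul_apply]
        rw [map_smul, this, smul_comm]
      have m1 := range_map_le_range_mapIncl (LinearMap.id - x⁻¹ • A) (LinearMap.id - x⁻¹ • B)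
        (LinearMap.ker A) (LinearMap.ker B) hk1 hk2 h1
      have m2 := range_map_le_range_mapIncl (x⁻¹ • A) (x⁻¹ • B)
        (Module.End.eigenspace A x) (Module.End.eigenspace B x) he1 he2 h2
      have : t = (t - pt) + pt := by abel
      rw [this]
      exact Submodule.add_mem_sup m1 m2
    · -- easy direction
      rw [sup_le_iff]
      constructor
      · rintro _ ⟨s, rfl⟩
        rw [LinearMap.mem_ker, LinearMap.sub_apply,
          lTensor_apply_mapIncl_ker, rTensor_apply_mapIncl_ker, sub_zero]
      · rintro _ ⟨s, rfl⟩
        rw [LinearMap.mem_ker, LinearMap.sub_apply,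
          lTensor_apply_mapIncl_eigen, rTensor_apply_mapIncl_eigen, sub_self]
  · rw [Submodule.disjoint_def]
    intro t ht1 ht2
    obtain ⟨s1, rfl⟩ := ht1
    obtain ⟨s2, hs2⟩ := ht2
    have h0 : LinearMap.rTensor W A (TensorProduct.mapIncl _ _ s1) = 0 :=
      rTensor_apply_mapIncl_ker A B s1
    rw [← hs2, rTensor_apply_mapIncl_eigen] at h0
    rw [← hs2]
    exact (smul_eq_zero.mp h0).resolve_left hx
end
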